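/- Weak conformance does not imply strong conformance: there exist languages L(N) and L(M) over two ports witnessing N ⊑_w M but not N ⊑_s M. Concretely, with L(M) = prefix-closure of {(x/(y₁,y₂)), (x/(y₁',y₂'))}* and L(N) = prefix-closure of (x/(y₁,y₂'))*: for each port p every projection of a trace of N is a projection of some trace of M, but the trace x/(y₁,y₂') of N is not ~-equivalent to any trace of M. -/
import Mathlib

/-- Events: input `x` and outputs `y₁, y₁'` at port 1; outputs `y₂, y₂'` at port 2. -/
inductive Ev where
  | x | y1 | y1' | y2 | y2'
deriving DecidableEq

def Ev.port : Ev → Fin 2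
  | .x => 0
  | .y1 => 0
  | .y1' => 0
  | .y2 => 1
  | .y2' => 1

def proj (p : Fin 2) (σ : List Ev) : List Ev :=
  σ.filter (fun a => a.port = p)

def traceEquiv (σ σ' : List Ev) : Prop :=
  ∀ p : Fin 2, proj p σ = proj p σ'

/-- `L(M)`: prefix closure of `{ x/(y₁,y₂), x/(y₁',y₂') }*`. -/
def LM : Set (List Ev) :=
  { w | ∃ v ∈ KStar.kstar (({[Ev.x, Ev.y1, Ev.y2], [Ev.x, Ev.y1', Ev.y2']}) : Language Ev),
      w <+: v }

/-- `L(N)`: prefix closure of `{ x/(y₁,y₂') }*`. -/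
def LN : Set (List Ev) :=
  { w | ∃ v ∈ KStar.kstar ({[Ev.x, Ev.y1, Ev.y2']} : Language Ev), w <+: v }

namespace Aux

open List

abbrev A : List Ev := [Ev.x, Ev.y1, Ev.y2]
abbrev B : List Ev := [Ev.x, Ev.y1', Ev.y2']
abbrev C : List Ev := [Ev.x, Ev.y1, Ev.y2']

/-- nonempty prefixes of joins of A/B blocks start with x -/
lemma head_x : ∀ (S : List (List Ev)), (∀ b ∈ S, b = A ∨ b = B) →
    ∀ w, w <+: S.flatten → w ≠ [] → ∃ w', w = Ev.x :: w' := by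
  intro S hS w hw hne
  cases S with
  | nil => simp at hw; exact absurd hw hne
  | cons b S' =>
    rcases hS b (by simp) with hb | hb <;> subst hb <;>
    · rcases hw with ⟨t, ht⟩
      cases w with
      | nil => exact absurd rfl hne
      | cons a w' =>
        simp only [flatten_cons] at ht
        have : a = Ev.x := by
          have h := congrArg List.head? ht
          simp at h
          exact h
        exact ⟨w', by rw [this]⟩

lemma single_block : ∀ (S : List (List Ev)), (∀ b ∈ S, b = A ∨ b = B) →
    ∀ w, w <+: S.flatten → w.count Ev.x ≤ 1 → w <+: A ∨ w <+: B := by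
  intro S
  induction S with
  | nil =>
    intro _ w hw _
    simp only [flatten_nil, prefix_nil] at hw
    subst hw; exact Or.inl (nil_prefix)
  | cons b S' ih =>
    intro hS w hw hcnt
    have hS' : ∀ x ∈ S', x = A ∨ x = B := fun x hx => hS x (by simp [hx])
    rcases hS b (by simp) with hb | hb <;> subst hb <;>
    · simp only [flatten_cons] at hw
      by_cases hlen : w.length ≤ 3
      · -- w is a prefix of the first block
        have hpb : w <+: _ := prefix_of_prefix_length_le hw (prefix_append _ _) (by simpa)
        first | exact Or.inl hpb | exact Or.inr hpb
      · push_neg at hlen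
        have hbw : _ <+: w :=
          prefix_of_prefix_length_le (prefix_append _ _) hw (by simp; omega)
        obtain ⟨w', rfl⟩ := hbw
        have hw' : w' <+: S'.flatten := by
          rcases hw with ⟨t, ht⟩
          rw [append_assoc] at ht
          exact ⟨t, (List.append_cancel_left ht)⟩
        have hc' : w'.count Ev.x = 0 := by
          simp [List.count_append] at hcnt ⊢
          omega
        have : w' = [] := by
          by_contra hne
          obtain ⟨w'', rfl⟩ := head_x S' hS' w' hw' hne
          simp [List.count_cons] at hc'
        subst this
        simp

lemma weak_helper (p : Fin 2) (f : Ev → Ev)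
    (hport : ∀ a, (f a).port = a.port)
    (hfix : ∀ a : Ev, a.port = p → f a = a)
    (hblock : List.map f C ∈ (({[Ev.x, Ev.y1, Ev.y2], [Ev.x, Ev.y1', Ev.y2']}) : Language Ev)) :
    ∀ σ ∈ LN, ∃ σp ∈ LM, proj p σ = proj p σp := by
  rintro σ ⟨v, hv, hpre⟩
  rw [Language.mem_kstar] at hv
  obtain ⟨S, rfl, hS⟩ := hv
  have hSC : ∀ b ∈ S, b = C := fun b hb => hS b hb
  refine ⟨σ.map f, ⟨(S.map (List.map f)).flatten, ?_, ?_⟩, ?_⟩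
  · apply Language.join_mem_kstar
    intro y hy
    simp only [List.mem_map] at hy
    obtain ⟨b, hb, rfl⟩ := hy
    rw [hSC b hb]
    exact hblock
  · rw [← List.map_flatten]
    exact hpre.map f
  · simp only [proj, List.filter_map]
    have h1 : (fun a => decide (Ev.port a = p)) ∘ f = fun a => decide (Ev.port a = p) := by
      funext a; simp [hport a]
    rw [h1]
    symm
    conv_rhs => rw [← List.map_id (σ.filter fun a => decide (Ev.port a = p))]
    apply List.map_congr_left
    intro a ha
    exact hfix a (by simpa using List.of_mem_filter ha)

end Aux

theorem weak_not_strong :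
    (∀ σ ∈ LN, ∀ p : Fin 2, ∃ σp ∈ LM, proj p σ = proj p σp) ∧
    ¬ (∀ σ ∈ LN, ∃ σ' ∈ LM, traceEquiv σ σ') ∧
    [Ev.x, Ev.y1, Ev.y2'] ∈ LN ∧
    ¬ ∃ σ' ∈ LM, traceEquiv [Ev.x, Ev.y1, Ev.y2'] σ' := by
  open Aux List in
  have hnotex : ¬ ∃ σ' ∈ LM, traceEquiv [Ev.x, Ev.y1, Ev.y2'] σ' := by
    rintro ⟨σ', ⟨v, hv, hpre⟩, hequiv⟩
    rw [Language.mem_kstar] at hv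
    obtain ⟨S, rfl, hS⟩ := hv
    have hS' : ∀ b ∈ S, b = A ∨ b = B := by
      intro b hb
      rcases hS b hb with h | h
      · exact Or.inl h
      · exact Or.inr h
    have h0 : proj 0 σ' = [Ev.x, Ev.y1] := by
      have := (hequiv 0).symm
      simpa [proj, Ev.port] using this
    have h1 : proj 1 σ' = [Ev.y2'] := by
      have := (hequiv 1).symm
      simpa [proj, Ev.port] using this
    have hcount : σ'.count Ev.x ≤ 1 := by
      have : (proj 0 σ').count Ev.x = σ'.count Ev.x := by
        simp [proj, List.count_filter, Ev.port]
      rw [h0] at this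
      simp [List.count_cons] at this
      omega
    have hy1 : Ev.y1 ∈ σ' := by
      have : Ev.y1 ∈ proj 0 σ' := by rw [h0]; simp
      exact List.mem_of_mem_filter this
    have hy2' : Ev.y2' ∈ σ' := by
      have : Ev.y2' ∈ proj 1 σ' := by rw [h1]; simp
      exact List.mem_of_mem_filter this
    rcases Aux.single_block S hS' σ' hpre hcount with h | h
    · have := h.sublist.mem hy2'
      simp at this
    · have := h.sublist.mem hy1
      simp at this
  refine ⟨?_, ?_, ?_, hnotex⟩
  · -- weak conformance
    intro σ hσ p
    fin_cases p
    · exact Aux.weak_helper 0 (fun a => if a = Ev.y2' then Ev.y2 else a)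
        (by intro a; cases a <;> simp [Ev.port])
        (by intro a ha; cases a <;> simp_all [Ev.port])
        (by left; rfl) σ hσ
    · exact Aux.weak_helper 1 (fun a => if a = Ev.y1 then Ev.y1' else a)
        (by intro a; cases a <;> simp [Ev.port])
        (by intro a ha; cases a <;> simp_all [Ev.port])
        (by right; rfl) σ hσ
  · -- ¬ strong
    intro h
    have hmem : [Ev.x, Ev.y1, Ev.y2'] ∈ LN := by
      refine ⟨[Ev.x, Ev.y1, Ev.y2'], ?_, List.prefix_refl _⟩
      rw [show ([Ev.x, Ev.y1, Ev.y2'] : List Ev) = [[Ev.x, Ev.y1, Ev.y2']].flatten by simp]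
      exact Language.join_mem_kstar (by intro y hy; simp at hy; exact hy)
    exact hnotex (h _ hmem)
  · refine ⟨[Ev.x, Ev.y1, Ev.y2'], ?_, List.prefix_refl _⟩
    rw [show ([Ev.x, Ev.y1, Ev.y2'] : List Ev) = [[Ev.x, Ev.y1, Ev.y2']].flatten by simp]
    exact Language.join_mem_kstar (by intro y hy; simp at hy; exact hy)
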